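/- Let k be a field, A a commutative k-algebra, and ε : A → k a k-algebra homomorphism. Let Φ_1,…,Φ_q ∈ A[[x]]^p, let M be the A[[x]]-submodule of A[[x]]^p generated by Φ_1,…,Φ_q, and let M_ε be the k[[x]]-submodule of k[[x]]^p generated by ε(Φ_1),…,ε(Φ_q), where ε is applied to each coefficient. Then N(M) ≤ N(M_ε) in the total order on diagrams. -/

import Mathlib

namespace QDiv

/-- Index set ℕ^n × {1,…,p}. -/
abbrev Idx (n p : ℕ) := (Fin n →₀ ℕ) × Fin p

variable {n p q : ℕ}

/-- Value of the positive linear form `L` on a multi-index. -/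
noncomputable def lval (L : Fin n → ℝ) (α : Fin n →₀ ℕ) : ℝ := ∑ i, L i * (α i : ℝ)

/-- Lexicographic order on multi-indices. -/
def mlexLt (a b : Fin n →₀ ℕ) : Prop := ∃ i : Fin n, (∀ j < i, a j = b j) ∧ a i < b i

/-- The order on `ℕ^n` given by comparing `(L α, α)` lexicographically. -/
def sLt (L : Fin n → ℝ) (a b : Fin n →₀ ℕ) : Prop :=
  lval L a < lval L b ∨ (lval L a = lval L b ∧ mlexLt a b)

/-- The total order on `ℕ^n × {1,…,p}` given by comparing `(L α, j, α)` lexicographically. -/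
def idxLt (L : Fin n → ℝ) (a b : Idx n p) : Prop :=
  lval L a.1 < lval L b.1 ∨
    (lval L a.1 = lval L b.1 ∧ (a.2 < b.2 ∨ (a.2 = b.2 ∧ mlexLt a.1 b.1)))

def idxLe (L : Fin n → ℝ) (a b : Idx n p) : Prop := ¬ idxLt L b a

section CommRing

variable {A : Type*} [CommRing A]

/-- The support of a `p`-tuple of formal power series. -/
def suppT (F : Fin p → MvPowerSeries (Fin n) A) : Set (Idx n p) :=
  {e | MvPowerSeries.coeff e.1 (F e.2) ≠ 0}

/-- The support of a single formal power series. -/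
def suppS (f : MvPowerSeries (Fin n) A) : Set (Fin n →₀ ℕ) :=
  {α | MvPowerSeries.coeff α f ≠ 0}

/-- `e` is the initial exponent `exp F` of the tuple `F`. -/
def IsExp (L : Fin n → ℝ) (F : Fin p → MvPowerSeries (Fin n) A) (e : Idx n p) : Prop :=
  e ∈ suppT F ∧ ∀ d ∈ suppT F, ¬ idxLt L d e

/-- `β` is the initial exponent of the scalar series `f`. -/
def IsExpS (L : Fin n → ℝ) (f : MvPowerSeries (Fin n) A) (β : Fin n →₀ ℕ) : Prop :=
  β ∈ suppS f ∧ ∀ γ ∈ suppS f, ¬ sLt L γ β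

/-- The diagram of initial exponents `N(M)` of a submodule `M ⊆ A[[x]]^p`. -/
def diagram (L : Fin n → ℝ)
    (M : Submodule (MvPowerSeries (Fin n) A) (Fin p → MvPowerSeries (Fin n) A)) :
    Set (Idx n p) :=
  {e | ∃ F ∈ M, IsExp L F e}

/-- `N + ℕ^n`. -/
def shift (N : Set (Idx n p)) : Set (Idx n p) :=
  {e | ∃ d ∈ N, ∃ β : Fin n →₀ ℕ, e = (d.1 + β, d.2)}

/-- A vertex of a diagram `N`. -/
def IsVertex (N : Set (Idx n p)) (e : Idx n p) : Prop :=
  e ∈ N ∧ shift (N \ {e}) ≠ N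

/-- The "cone" `(α,j) + ℕ^n` over a single index. -/
def cone (d : Idx n p) : Set (Idx n p) :=
  {e | e.2 = d.2 ∧ ∃ β : Fin n →₀ ℕ, e.1 = d.1 + β}

/-- The pieces `Δ_i` of the partition of `ℕ^n × {1,…,p}` associated with
initial exponents `v 1, …, v q`. -/
def Delta (v : Fin q → Idx n p) (i : Fin q) : Set (Idx n p) :=
  cone (v i) \ ⋃ (k : Fin q) (_ : k < i), cone (v k)

/-- The remaining piece `Δ` of the partition. -/
def DeltaC (v : Fin q → Idx n p) : Set (Idx n p) := (⋃ i, cone (v i))ᶜ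

/-- The monomial tuple `x^{(α,j)}`. -/
noncomputable def xMon (e : Idx n p) : Fin p → MvPowerSeries (Fin n) A := fun j =>
  if j = e.2 then MvPowerSeries.monomial e.1 (1 : A) else 0

/-- All coefficients of a scalar series satisfy a predicate `P`
(e.g. membership in a subring of `K`). -/
def coeffsIn (P : A → Prop) (f : MvPowerSeries (Fin n) A) : Prop :=
  ∀ α : Fin n →₀ ℕ, P (MvPowerSeries.coeff α f)

/-- All coefficients of a tuple of series satisfy `P`. -/
def coeffsInT (P : A → Prop) (F : Fin p → MvPowerSeries (Fin n) A) : Prop :=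
  ∀ j, coeffsIn P (F j)

/-- `G` belongs to the `B[[x]]`-submodule of `B[[x]]^p` generated by the set `Mset`,
where `B[[x]]` is the ring of series all of whose coefficients satisfy `P`. -/
def inSpanP (P : A → Prop) (Mset : Set (Fin p → MvPowerSeries (Fin n) A))
    (G : Fin p → MvPowerSeries (Fin n) A) : Prop :=
  ∃ (k : ℕ) (c : Fin k → MvPowerSeries (Fin n) A)
    (m : Fin k → (Fin p → MvPowerSeries (Fin n) A)),
    (∀ l, coeffsIn P (c l)) ∧ (∀ l, m l ∈ Mset) ∧ ∀ j, G j = ∑ l, c l * m l j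

/-- Membership in the image of the localization `S⁻¹A` inside the fraction field `K`. -/
def locMem {K : Type*} [Field K] [Algebra A K] (S : Submonoid A) (x : K) : Prop :=
  ∃ a : A, ∃ s ∈ S, x * algebraMap A K s = algebraMap A K a

/-- The multiplicative subset generated by the initial coefficients of `Φ_1,…,Φ_q`, given
their initial exponents `v i`. -/
def initCoeffMonoid (Φ : Fin q → (Fin p → MvPowerSeries (Fin n) A)) (v : Fin q → Idx n p) :
    Submonoid A :=
  Submonoid.closure (Set.range fun i => MvPowerSeries.coeff (v i).1 (Φ i (v i).2))

/-- Strict order on diagrams: lexicographic comparison of the increasing sequences of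
vertices (padded by `∞`). Equivalently: the smallest index at which the vertex sets
differ is a vertex of the first diagram. -/
def DiagLT (L : Fin n → ℝ) (N₁ N₂ : Set (Idx n p)) : Prop :=
  ∃ e, IsVertex N₁ e ∧ ¬ IsVertex N₂ e ∧ ∀ d, idxLt L d e → (IsVertex N₁ d ↔ IsVertex N₂ d)

/-- Order on diagrams. -/
def DiagLE (L : Fin n → ℝ) (N₁ N₂ : Set (Idx n p)) : Prop :=
  (∀ e, IsVertex N₁ e ↔ IsVertex N₂ e) ∨ DiagLT L N₁ N₂

end CommRing

end QDiv
namespace QDiv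

section Order

variable {n p : ℕ} {L : Fin n → ℝ}

theorem lval_add (L : Fin n → ℝ) (a b : Fin n →₀ ℕ) :
    lval L (a + b) = lval L a + lval L b := by
  simp [lval, Finsupp.add_apply, mul_add, Finset.sum_add_distrib]

theorem lval_nonneg (hL : ∀ i, 0 < L i) (a : Fin n →₀ ℕ) : 0 ≤ lval L a :=
  Finset.sum_nonneg fun i _ => mul_nonneg (hL i).le (Nat.cast_nonneg _)

theorem lval_pos (hL : ∀ i, 0 < L i) {b : Fin n →₀ ℕ} (hb : b ≠ 0) : 0 < lval L b := by
  obtain ⟨i, hi⟩ : ∃ i, b i ≠ 0 := by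
    by_contra h
    push_neg at h
    exact hb (Finsupp.ext fun i => h i)
  refine Finset.sum_pos' (fun i _ => mul_nonneg (hL i).le (Nat.cast_nonneg _)) ⟨i, Finset.mem_univ i, ?_⟩
  have : (0 : ℝ) < (b i : ℝ) := by exact_mod_cast Nat.pos_of_ne_zero hi
  exact mul_pos (hL i) this

theorem mlexLt_irrefl (a : Fin n →₀ ℕ) : ¬ mlexLt a a := by
  rintro ⟨i, -, hi⟩; exact lt_irrefl _ hi

theorem mlexLt_trans {a b c : Fin n →₀ ℕ} (h₁ : mlexLt a b) (h₂ : mlexLt b c) : mlexLt a c := by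
  obtain ⟨i, hi, hi'⟩ := h₁
  obtain ⟨j, hj, hj'⟩ := h₂
  rcases lt_trichotomy i j with h | h | h
  · exact ⟨i, fun l hl => (hi l hl).trans (hj l (hl.trans h)), hi'.trans_eq (hj i h)⟩
  · exact ⟨i, fun l hl => (hi l hl).trans (hj l (hl.trans_eq h)), hi'.trans (h ▸ hj')⟩
  · exact ⟨j, fun l hl => (hi l (hl.trans h)).trans (hj l hl), ((hi j h).symm ▸ hj')⟩

theorem mlexLt_total {a b : Fin n →₀ ℕ} (hab : a ≠ b) : mlexLt a b ∨ mlexLt b a := by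
  have hne : ∃ i, a i ≠ b i := by
    by_contra h
    push_neg at h
    exact hab (Finsupp.ext fun i => h i)
  classical
  set s : Finset (Fin n) := Finset.univ.filter (fun i => a i ≠ b i) with hs
  have hsne : s.Nonempty := ⟨hne.choose, by simp [hs, hne.choose_spec]⟩
  set i₀ := s.min' hsne with hi₀
  have hmem : a i₀ ≠ b i₀ := by
    have := s.min'_mem hsne
    simpa [hs] using this
  have heq : ∀ j < i₀, a j = b j := by
    intro j hj
    by_contra hne'
    have : i₀ ≤ j := s.min'_le j (by simp [hs, hne'])
    exact absurd hj (not_lt.2 this)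
  rcases lt_or_gt_of_ne hmem with h | h
  · exact Or.inl ⟨i₀, heq, h⟩
  · exact Or.inr ⟨i₀, fun j hj => (heq j hj).symm, h⟩

theorem mlexLt_add_right {a b c : Fin n →₀ ℕ} (h : mlexLt a b) : mlexLt (a + c) (b + c) := by
  obtain ⟨i, hi, hi'⟩ := h
  exact ⟨i, fun j hj => by simp [Finsupp.add_apply, hi j hj], by
    simpa [Finsupp.add_apply] using Nat.add_lt_add_right hi' (c i)⟩

theorem mlexLt_of_add_right {a b c : Fin n →₀ ℕ} (h : mlexLt (a + c) (b + c)) : mlexLt a b := by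
  obtain ⟨i, hi, hi'⟩ := h
  refine ⟨i, fun j hj => ?_, ?_⟩
  · have := hi j hj
    simpa [Finsupp.add_apply] using this
  · simpa [Finsupp.add_apply] using hi'

theorem idxLt_irrefl (L : Fin n → ℝ) (a : Idx n p) : ¬ idxLt L a a := by
  rintro (h | ⟨-, h | ⟨-, h⟩⟩)
  · exact lt_irrefl _ h
  · exact lt_irrefl _ h
  · exact mlexLt_irrefl _ h

theorem idxLt_trans {a b c : Idx n p} (h₁ : idxLt L a b) (h₂ : idxLt L b c) : idxLt L a c := by
  rcases h₁ with h₁ | ⟨e₁, h₁⟩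
  · rcases h₂ with h₂ | ⟨e₂, h₂⟩
    · exact Or.inl (h₁.trans h₂)
    · exact Or.inl (h₁.trans_eq e₂)
  · rcases h₂ with h₂ | ⟨e₂, h₂⟩
    · exact Or.inl (e₁.trans_lt h₂)
    · refine Or.inr ⟨e₁.trans e₂, ?_⟩
      rcases h₁ with h₁ | ⟨f₁, h₁⟩
      · rcases h₂ with h₂ | ⟨f₂, h₂⟩
        · exact Or.inl (h₁.trans h₂)
        · exact Or.inl (h₁.trans_eq f₂)
      · rcases h₂ with h₂ | ⟨f₂, h₂⟩
        · exact Or.inl (f₁ ▸ h₂)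
        · exact Or.inr ⟨f₁.trans f₂, mlexLt_trans h₁ h₂⟩

theorem idxLt_trichotomy (L : Fin n → ℝ) (a b : Idx n p) :
    idxLt L a b ∨ a = b ∨ idxLt L b a := by
  rcases lt_trichotomy (lval L a.1) (lval L b.1) with h | h | h
  · exact Or.inl (Or.inl h)
  · rcases lt_trichotomy a.2 b.2 with h2 | h2 | h2
    · exact Or.inl (Or.inr ⟨h, Or.inl h2⟩)
    · by_cases h1 : a.1 = b.1
      · exact Or.inr (Or.inl (Prod.ext h1 h2))
      · rcases mlexLt_total h1 with hm | hm
        · exact Or.inl (Or.inr ⟨h, Or.inr ⟨h2, hm⟩⟩)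
        · exact Or.inr (Or.inr (Or.inr ⟨h.symm, Or.inr ⟨h2.symm, hm⟩⟩))
    · exact Or.inr (Or.inr (Or.inr ⟨h.symm, Or.inl h2⟩))
  · exact Or.inr (Or.inr (Or.inl h))

theorem idxLt_asymm {a b : Idx n p} (h : idxLt L a b) : ¬ idxLt L b a :=
  fun h' => idxLt_irrefl L a (idxLt_trans h h')

theorem eq_of_not_idxLt {a b : Idx n p} (h₁ : ¬ idxLt L a b) (h₂ : ¬ idxLt L b a) : a = b := by
  rcases idxLt_trichotomy L a b with h | h | h
  · exact absurd h h₁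
  · exact h
  · exact absurd h h₂

theorem idxLt_add_right_iff {a b : Idx n p} (β : Fin n →₀ ℕ) :
    idxLt L (a.1 + β, a.2) (b.1 + β, b.2) ↔ idxLt L a b := by
  simp only [idxLt, lval_add]
  constructor
  · rintro (h | ⟨h, h2 | ⟨h2, h3⟩⟩)
    · exact Or.inl (by linarith)
    · exact Or.inr ⟨by linarith, Or.inl h2⟩
    · exact Or.inr ⟨by linarith, Or.inr ⟨h2, mlexLt_of_add_right h3⟩⟩
  · rintro (h | ⟨h, h2 | ⟨h2, h3⟩⟩)
    · exact Or.inl (by linarith)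
    · exact Or.inr ⟨by linarith, Or.inl h2⟩
    · exact Or.inr ⟨by linarith, Or.inr ⟨h2, mlexLt_add_right h3⟩⟩

theorem idxLt_add_self (hL : ∀ i, 0 < L i) (a : Idx n p) {β : Fin n →₀ ℕ} (hβ : β ≠ 0) :
    idxLt L a (a.1 + β, a.2) := by
  left
  rw [lval_add]
  linarith [lval_pos hL hβ]

theorem not_idxLt_add_self (hL : ∀ i, 0 < L i) (a : Idx n p) (β : Fin n →₀ ℕ) :
    ¬ idxLt L (a.1 + β, a.2) a := by
  intro h
  rcases eq_or_ne β 0 with rfl | hβ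
  · simp only [add_zero] at h
    exact idxLt_irrefl L a h
  · exact idxLt_asymm (idxLt_add_self hL a hβ) h

end Order

end QDiv
namespace QDiv

section WF

variable {n p : ℕ} {L : Fin n → ℝ}

theorem finite_lval_le (hL : ∀ i, 0 < L i) (C : ℝ) :
    {d : Idx n p | lval L d.1 ≤ C}.Finite := by
  classical
  have hbound : ∀ (α : Fin n →₀ ℕ), lval L α ≤ C → ∀ i, α i ≤ ⌈C / L i⌉₊ := by
    intro α hα i
    have h1 : L i * (α i : ℝ) ≤ lval L α := by
      refine Finset.single_le_sum (f := fun i => L i * (α i : ℝ)) ?_ (Finset.mem_univ i)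
      intro j _
      exact mul_nonneg (hL j).le (Nat.cast_nonneg _)
    have h2 : (α i : ℝ) ≤ C / L i := by
      rw [le_div_iff₀ (hL i), mul_comm]; linarith
    exact_mod_cast h2.trans (Nat.le_ceil _)
  set B : Fin n → ℕ := fun i => ⌈C / L i⌉₊ with hB
  apply Set.Finite.subset (Set.finite_range
    (fun f : (∀ i : Fin n, Fin (B i + 1)) × Fin p =>
      ((Finsupp.equivFunOnFinite.symm fun i => (f.1 i : ℕ), f.2) : Idx n p)))
  rintro ⟨α, j⟩ hd
  refine ⟨⟨fun i => ⟨α i, Nat.lt_succ_of_le (hbound α hd i)⟩, j⟩, ?_⟩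
  simp only [Prod.mk.injEq, and_true]
  exact Finsupp.equivFunOnFinite_symm_coe α

theorem finite_idxLt (hL : ∀ i, 0 < L i) (a : Idx n p) :
    {d : Idx n p | idxLt L d a}.Finite := by
  apply (finite_lval_le hL (lval L a.1)).subset
  rintro d (h | ⟨h, -⟩)
  · exact h.le
  · exact h.le

private theorem acc_aux (hL : ∀ i, 0 < L i) :
    ∀ (m : ℕ) (a : Idx n p), ((finite_idxLt hL a).toFinset.card ≤ m) → Acc (idxLt L) a := by
  intro m
  induction m with
  | zero =>
    intro a ha
    refine Acc.intro a fun b hb => ?_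
    have hmem : b ∈ (finite_idxLt hL a).toFinset := by simpa using hb
    have := Finset.card_pos.mpr ⟨b, hmem⟩
    omega
  | succ m ih =>
    intro a ha
    refine Acc.intro a fun b hb => ih b ?_
    have hsub : (finite_idxLt hL b).toFinset ⊆ (finite_idxLt hL a).toFinset \ {b} := by
      intro d hd
      simp only [Set.Finite.mem_toFinset, Set.mem_setOf_eq] at hd
      simp only [Finset.mem_sdiff, Finset.mem_singleton, Set.Finite.mem_toFinset,
        Set.mem_setOf_eq]
      exact ⟨idxLt_trans hd hb, fun h => idxLt_irrefl L b (h ▸ hd)⟩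
    have hmem : b ∈ (finite_idxLt hL a).toFinset := by simpa using hb
    have := Finset.card_le_card hsub
    have hlt : ((finite_idxLt hL a).toFinset \ {b}).card
        < (finite_idxLt hL a).toFinset.card := by
      refine Finset.card_lt_card ?_
      refine Finset.ssubset_iff_of_subset (Finset.sdiff_subset) |>.mpr ⟨b, hmem, by simp⟩
    omega

theorem idxLt_wf (hL : ∀ i, 0 < L i) : WellFounded (idxLt (p := p) L) :=
  ⟨fun a => acc_aux hL _ a le_rfl⟩

/-- Minimum of a nonempty set. -/
theorem exists_min (hL : ∀ i, 0 < L i) {S : Set (Idx n p)} (hS : S.Nonempty) :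
    ∃ e ∈ S, ∀ d ∈ S, ¬ idxLt L d e := by
  obtain ⟨e, he, hmin⟩ := (idxLt_wf hL).has_min S hS
  exact ⟨e, he, fun d hd => hmin d hd⟩

end WF

end QDiv
namespace QDiv

section Diagram

variable {n p : ℕ} {L : Fin n → ℝ} {A : Type*} [CommRing A]

theorem smul_apply' (r : MvPowerSeries (Fin n) A) (F : Fin p → MvPowerSeries (Fin n) A)
    (j : Fin p) : (r • F) j = r * F j := rfl

theorem IsExp_monomial_smul (hL : ∀ i, 0 < L i) {F : Fin p → MvPowerSeries (Fin n) A}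
    {e : Idx n p} (h : IsExp L F e) (β : Fin n →₀ ℕ) :
    IsExp L ((MvPowerSeries.monomial β (1 : A)) • F) (e.1 + β, e.2) := by
  constructor
  · show MvPowerSeries.coeff (e.1 + β) (MvPowerSeries.monomial β (1 : A) * F e.2) ≠ 0
    rw [add_comm, MvPowerSeries.coeff_add_monomial_mul, one_mul]
    exact h.1
  · rintro ⟨α, j⟩ hd
    have hcoeff : MvPowerSeries.coeff α (MvPowerSeries.monomial β (1 : A) * F j) ≠ 0 := hd
    rw [MvPowerSeries.coeff_monomial_mul] at hcoeff
    by_cases hle : β ≤ α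
    · rw [if_pos hle, one_mul] at hcoeff
      have hmem : ((α - β, j) : Idx n p) ∈ suppT F := hcoeff
      have := h.2 _ hmem
      have hrw : ((α, j) : Idx n p) = ((α - β) + β, j) := by
        rw [tsub_add_cancel_of_le hle]
      rw [hrw]
      intro hcon
      exact this ((idxLt_add_right_iff (a := ((α - β, j) : Idx n p)) (b := e) β).mp hcon)
    · rw [if_neg hle] at hcoeff
      exact absurd rfl hcoeff

theorem diagram_shift (hL : ∀ i, 0 < L i)
    {M : Submodule (MvPowerSeries (Fin n) A) (Fin p → MvPowerSeries (Fin n) A)}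
    {e : Idx n p} (he : e ∈ diagram L M) (β : Fin n →₀ ℕ) :
    ((e.1 + β, e.2) : Idx n p) ∈ diagram L M := by
  obtain ⟨F, hF, hFe⟩ := he
  exact ⟨_, M.smul_mem (MvPowerSeries.monomial β (1 : A)) hF, IsExp_monomial_smul hL hFe β⟩

theorem not_isVertex_of_decomp {N : Set (Idx n p)}
    (hstab : ∀ d ∈ N, ∀ β : Fin n →₀ ℕ, ((d.1 + β, d.2) : Idx n p) ∈ N)
    {e w : Idx n p} {β : Fin n →₀ ℕ} (hw : w ∈ N) (hwe : w ≠ e)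
    (heq : e = (w.1 + β, w.2)) : ¬ IsVertex N e := by
  intro hv
  apply hv.2
  apply Set.eq_of_subset_of_subset
  · rintro x ⟨d, ⟨hdN, -⟩, β', rfl⟩
    exact hstab d hdN β'
  · intro a ha
    by_cases hae : a = e
    · exact ⟨w, ⟨hw, hwe⟩, β, hae ▸ heq⟩
    · exact ⟨a, ⟨ha, hae⟩, 0, by simp⟩

theorem mem_decomp_vertex (hL : ∀ i, 0 < L i) {N : Set (Idx n p)}
    (hstab : ∀ d ∈ N, ∀ β : Fin n →₀ ℕ, ((d.1 + β, d.2) : Idx n p) ∈ N) :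
    ∀ e ∈ N, ∃ w, IsVertex N w ∧ ∃ β : Fin n →₀ ℕ, e = (w.1 + β, w.2) := by
  intro e
  induction e using WellFounded.induction (idxLt_wf hL) with
  | _ e ih =>
    intro he
    by_cases hv : IsVertex N e
    · exact ⟨e, hv, 0, by simp⟩
    · have hsh : shift (N \ {e}) = N := by
        by_contra hne
        exact hv ⟨he, hne⟩
      have : e ∈ shift (N \ {e}) := hsh.symm ▸ he
      obtain ⟨d, ⟨hdN, hde⟩, β, heq⟩ := this
      have hβ : β ≠ 0 := by
        rintro rfl
        apply hde
        rw [Set.mem_singleton_iff, heq]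
        exact Prod.ext (add_zero d.1).symm rfl
      have hlt : idxLt L d e := heq ▸ idxLt_add_self hL d hβ
      obtain ⟨w, hwv, γ, hγ⟩ := ih d hlt hdN
      refine ⟨w, hwv, γ + β, ?_⟩
      rw [heq, hγ]
      exact Prod.ext (by simp [add_assoc]) rfl

end Diagram

end QDiv
namespace QDiv

section Algebra

open MvPowerSeries

variable {n p q : ℕ} {L : Fin n → ℝ}
variable {k : Type*} [Field k] {A : Type*} [CommRing A] [Algebra k A] (ε : A →ₐ[k] k)

/-- Lifting elements of the specialized module. -/
theorem exists_lift (Φ : Fin q → (Fin p → MvPowerSeries (Fin n) A))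
    {G : Fin p → MvPowerSeries (Fin n) k}
    (hG : G ∈ Submodule.span (MvPowerSeries (Fin n) k)
      (Set.range fun i => fun j => MvPowerSeries.map (ε : A →+* k) (Φ i j))) :
    ∃ F ∈ Submodule.span (MvPowerSeries (Fin n) A) (Set.range Φ),
      ∀ j, MvPowerSeries.map (ε : A →+* k) (F j) = G j := by
  induction hG using Submodule.span_induction with
  | mem x hx =>
    obtain ⟨i, rfl⟩ := hx
    exact ⟨Φ i, Submodule.subset_span ⟨i, rfl⟩, fun j => rfl⟩
  | zero => exact ⟨0, Submodule.zero_mem _, fun j => map_zero _⟩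
  | add x y hx hy ihx ihy =>
    obtain ⟨F₁, hF₁, h₁⟩ := ihx
    obtain ⟨F₂, hF₂, h₂⟩ := ihy
    exact ⟨F₁ + F₂, Submodule.add_mem _ hF₁ hF₂, fun j => by
      show MvPowerSeries.map (ε : A →+* k) (F₁ j + F₂ j) = x j + y j
      rw [map_add, h₁ j, h₂ j]⟩
  | smul a x hx ihx =>
    obtain ⟨F, hF, h⟩ := ihx
    refine ⟨(MvPowerSeries.map (σ := Fin n) (algebraMap k A) a) • F,
      Submodule.smul_mem _ _ hF, fun j => ?_⟩
    show MvPowerSeries.map (ε : A →+* k)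
      ((MvPowerSeries.map (σ := Fin n) (algebraMap k A) a) * F j) = a * x j
    rw [map_mul, h j]
    congr 1
    ext α
    rw [MvPowerSeries.coeff_map, MvPowerSeries.coeff_map]
    exact ε.commutes _

end Algebra

end QDiv
namespace QDiv

section Raise

open MvPowerSeries

variable {n p : ℕ} {L : Fin n → ℝ}
variable {k : Type*} [Field k] {A : Type*} [CommRing A] [Algebra k A] {ε : A →ₐ[k] k}
variable {M : Submodule (MvPowerSeries (Fin n) A) (Fin p → MvPowerSeries (Fin n) A)}
variable {G : Fin p → MvPowerSeries (Fin n) k} {e : Idx n p}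

theorem raise_done (hGe : IsExp L G e)
    {F : Fin p → MvPowerSeries (Fin n) A} {u : k} (hu : u ≠ 0)
    (hcomm : ∀ j, MvPowerSeries.map (ε : A →+* k) (F j)
      = MvPowerSeries.C (σ := Fin n) u * G j)
    (hnone : ∀ d ∈ suppT F, ¬ idxLt L d e) :
    IsExp L F e ∧ ε (MvPowerSeries.coeff e.1 (F e.2)) ≠ 0 := by
  have hc : ∀ d : Idx n p, ε (MvPowerSeries.coeff d.1 (F d.2))
      = u * MvPowerSeries.coeff d.1 (G d.2) := by
    intro d
    have := congrArg (MvPowerSeries.coeff d.1) (hcomm d.2)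
    rwa [MvPowerSeries.coeff_map, MvPowerSeries.coeff_C_mul] at this
  have hne : ε (MvPowerSeries.coeff e.1 (F e.2)) ≠ 0 := by
    rw [hc e]
    exact mul_ne_zero hu hGe.1
  refine ⟨⟨?_, hnone⟩, hne⟩
  show MvPowerSeries.coeff e.1 (F e.2) ≠ 0
  intro h0
  rw [h0, map_zero] at hne
  exact hne rfl

theorem raise (hL : ∀ i, 0 < L i) (hGe : IsExp L G e)
    (oracle : ∀ f : Idx n p, idxLt L f e → (∃ F ∈ M, IsExp L F f) →
      ∃ H ∈ M, ∃ w : Idx n p, ∃ β : Fin n →₀ ℕ, f = (w.1 + β, w.2) ∧ IsExp L H w ∧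
        ε (MvPowerSeries.coeff w.1 (H w.2)) ≠ 0) :
    ∀ m : ℕ, ∀ F ∈ M, ∀ u : k, u ≠ 0 →
      (∀ j, MvPowerSeries.map (ε : A →+* k) (F j)
        = MvPowerSeries.C (σ := Fin n) u * G j) →
      (∀ d ∈ suppT F, idxLt L d e →
        ({d' : Idx n p | idxLt L d' e ∧ ¬ idxLt L d' d}.ncard ≤ m)) →
      ∃ F' ∈ M, IsExp L F' e ∧ ε (MvPowerSeries.coeff e.1 (F' e.2)) ≠ 0 := by
  have hfin : ∀ d : Idx n p, {d' : Idx n p | idxLt L d' e ∧ ¬ idxLt L d' d}.Finite :=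
    fun d => (finite_idxLt hL e).subset fun d' hd' => hd'.1
  intro m
  induction m with
  | zero =>
    intro F hF u hu hcomm hm
    refine ⟨F, hF, raise_done hGe hu hcomm ?_⟩
    intro d hd hlt
    have h1 : d ∈ {d' : Idx n p | idxLt L d' e ∧ ¬ idxLt L d' d} :=
      ⟨hlt, idxLt_irrefl L d⟩
    have h2 := hm d hd hlt
    have h3 : 0 < {d' : Idx n p | idxLt L d' e ∧ ¬ idxLt L d' d}.ncard :=
      (Set.ncard_pos (hfin d)).mpr ⟨d, h1⟩
    omega
  | succ m ih =>
    intro F hF u hu hcomm hm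
    by_cases hnone : ∀ d ∈ suppT F, ¬ idxLt L d e
    · exact ⟨F, hF, raise_done hGe hu hcomm hnone⟩
    · push_neg at hnone
      obtain ⟨d₀, hd₀, hd₀e⟩ := hnone
      -- f : minimum of the support points below e
      obtain ⟨f, ⟨hfF, hfe⟩, hfmin'⟩ :=
        exists_min hL (S := {d | d ∈ suppT F ∧ idxLt L d e}) ⟨d₀, hd₀, hd₀e⟩
      have hfmin : ∀ d ∈ suppT F, ¬ idxLt L d f := by
        intro d hd hdf
        exact hfmin' d ⟨hd, idxLt_trans hdf hfe⟩ hdf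
      -- f is the initial exponent of F
      have hFf : IsExp L F f := ⟨hfF, hfmin⟩
      obtain ⟨H, hH, w, β, hfβ, hHw, hεc⟩ := oracle f hfe ⟨F, hF, hFf⟩
      set c := MvPowerSeries.coeff w.1 (H w.2) with hc
      set a := MvPowerSeries.coeff f.1 (F f.2) with ha
      -- ε a = 0 since f is below the initial exponent of G
      have hεa : ε a = 0 := by
        have h1 := congrArg (MvPowerSeries.coeff f.1) (hcomm f.2)
        rw [MvPowerSeries.coeff_map, MvPowerSeries.coeff_C_mul] at h1
        have h2 : MvPowerSeries.coeff f.1 (G f.2) = 0 := by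
          by_contra h3
          exact hGe.2 f h3 hfe
        have h1' : ε (MvPowerSeries.coeff f.1 (F f.2)) = u * MvPowerSeries.coeff f.1 (G f.2) := h1
        rw [ha, h1', h2, mul_zero]
      set F' : Fin p → MvPowerSeries (Fin n) A :=
        (MvPowerSeries.C (σ := Fin n) c) • F -
          ((MvPowerSeries.C (σ := Fin n) a) * MvPowerSeries.monomial β (1 : A)) • H with hF'
      have hF'M : F' ∈ M :=
        Submodule.sub_mem _ (M.smul_mem _ hF) (M.smul_mem _ hH)
      -- coefficient formula for F'
      have hcoe : ∀ d : Idx n p, MvPowerSeries.coeff d.1 (F' d.2)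
          = c * MvPowerSeries.coeff d.1 (F d.2)
            - a * (if β ≤ d.1 then MvPowerSeries.coeff (d.1 - β) (H d.2) else 0) := by
        intro d
        show MvPowerSeries.coeff d.1
          (MvPowerSeries.C (σ := Fin n) c * F d.2
            - (MvPowerSeries.C (σ := Fin n) a * MvPowerSeries.monomial β (1 : A)) * H d.2) = _
        rw [map_sub, MvPowerSeries.coeff_C_mul, mul_assoc,
          MvPowerSeries.coeff_C_mul, MvPowerSeries.coeff_monomial_mul]
        simp only [one_mul]
      -- the coefficient of F' at f vanishes
      have hf0 : MvPowerSeries.coeff f.1 (F' f.2) = 0 := by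
        rw [hcoe f]
        have h1 : β ≤ f.1 := by rw [hfβ]; exact le_add_self
        have h2 : f.1 - β = w.1 := by rw [hfβ]; simp
        have h3 : f.2 = w.2 := by rw [hfβ]
        rw [if_pos h1]
        have h4 : MvPowerSeries.coeff (f.1 - β) (H f.2) = c := by rw [h2, h3]
        rw [h4, ← ha]
        ring
      -- every support point of F' below e is strictly above f
      have hsupp' : ∀ d ∈ suppT F', idxLt L d e → idxLt L f d := by
        intro d hd hde
        have hcd : MvPowerSeries.coeff d.1 (F' d.2) ≠ 0 := hd
        have hdf : d ≠ f := by
          rintro rfl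
          exact hcd hf0
        have hnotlt : ¬ idxLt L d f := by
          rw [hcoe d] at hcd
          by_cases hdF : MvPowerSeries.coeff d.1 (F d.2) ≠ 0
          · exact hfmin d hdF
          · push_neg at hdF
            rw [hdF, mul_zero, zero_sub, neg_ne_zero] at hcd
            have hite : (if β ≤ d.1 then MvPowerSeries.coeff (d.1 - β) (H d.2) else 0) ≠ 0 := by
              intro h0
              rw [h0, mul_zero] at hcd
              exact hcd rfl
            by_cases hβd : β ≤ d.1
            · rw [if_pos hβd] at hite
              have hmem : ((d.1 - β, d.2) : Idx n p) ∈ suppT H := hite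
              have hnw := hHw.2 _ hmem
              have hrw : d = (((d.1 - β) + β, d.2) : Idx n p) := by
                rw [tsub_add_cancel_of_le hβd]
              intro hcon
              apply hnw
              rw [hfβ] at hcon
              rw [hrw] at hcon
              exact (idxLt_add_right_iff (a := ((d.1 - β, d.2) : Idx n p)) (b := w) β).mp hcon
            · rw [if_neg hβd] at hite
              exact absurd rfl hite
        rcases idxLt_trichotomy L f d with h | h | h
        · exact h
        · exact absurd h.symm hdf
        · exact absurd h hnotlt
      -- new commutation equation
      have hcomm' : ∀ j, MvPowerSeries.map (ε : A →+* k) (F' j)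
          = MvPowerSeries.C (σ := Fin n) (ε c * u) * G j := by
        intro j
        show MvPowerSeries.map (ε : A →+* k)
          (MvPowerSeries.C (σ := Fin n) c * F j
            - (MvPowerSeries.C (σ := Fin n) a * MvPowerSeries.monomial β (1 : A)) * H j) = _
        have hεa' : (ε : A →+* k) a = 0 := hεa
        rw [map_sub, map_mul, map_mul, map_mul, MvPowerSeries.map_C, MvPowerSeries.map_C,
          hεa', map_zero (MvPowerSeries.C (σ := Fin n) (R := k)), zero_mul, zero_mul, sub_zero, hcomm j,
          ← mul_assoc, ← map_mul]
        rfl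
      -- cardinality bound decreases
      have hm' : ∀ d ∈ suppT F', idxLt L d e →
          {d' : Idx n p | idxLt L d' e ∧ ¬ idxLt L d' d}.ncard ≤ m := by
        intro d hd hde
        have hfd := hsupp' d hd hde
        have hsub : {d' : Idx n p | idxLt L d' e ∧ ¬ idxLt L d' d}
            ⊆ {d' : Idx n p | idxLt L d' e ∧ ¬ idxLt L d' f} \ {f} := by
          intro d' ⟨h1, h2⟩
          refine ⟨⟨h1, fun h3 => h2 (idxLt_trans h3 hfd)⟩, ?_⟩
          intro h4
          rw [Set.mem_singleton_iff] at h4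
          subst h4
          exact h2 hfd
        have h5 : ({d' : Idx n p | idxLt L d' e ∧ ¬ idxLt L d' f} \ {f}).ncard
            < {d' : Idx n p | idxLt L d' e ∧ ¬ idxLt L d' f}.ncard :=
          Set.ncard_diff_singleton_lt_of_mem ⟨hfe, idxLt_irrefl L f⟩ (hfin f)
        have h6 := Set.ncard_le_ncard hsub ((hfin f).diff (t := {f}))
        have h7 := hm f hfF hfe
        omega
      exact ih F' hF'M (ε c * u) (mul_ne_zero hεc hu) hcomm' hm'

end Raise

end QDiv
namespace QDiv

section Main

open MvPowerSeries

variable {n p q : ℕ} {L : Fin n → ℝ}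
variable {k : Type*} [Field k] {A : Type*} [CommRing A] [Algebra k A]

theorem claim (hL : ∀ i, 0 < L i) (ε : A →ₐ[k] k)
    (Φ : Fin q → (Fin p → MvPowerSeries (Fin n) A)) (estar : Idx n p)
    (hSD : ∀ d : Idx n p, idxLt L d estar →
      (IsVertex (diagram L (Submodule.span (MvPowerSeries (Fin n) A) (Set.range Φ))) d ↔
       IsVertex (diagram L (Submodule.span (MvPowerSeries (Fin n) k)
         (Set.range fun i => fun j =>
           MvPowerSeries.map (ε : A →+* k) (Φ i j)))) d)) :
    ∀ e : Idx n p, ¬ idxLt L estar e →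
      e ∈ diagram L (Submodule.span (MvPowerSeries (Fin n) k)
        (Set.range fun i => fun j => MvPowerSeries.map (ε : A →+* k) (Φ i j))) →
      ∃ F ∈ Submodule.span (MvPowerSeries (Fin n) A) (Set.range Φ),
        IsExp L F e ∧ ε (MvPowerSeries.coeff e.1 (F e.2)) ≠ 0 := by
  set M := Submodule.span (MvPowerSeries (Fin n) A) (Set.range Φ) with hM
  set Mk := Submodule.span (MvPowerSeries (Fin n) k)
    (Set.range fun i => fun j => MvPowerSeries.map (ε : A →+* k) (Φ i j)) with hMk
  intro e
  induction e using WellFounded.induction (idxLt_wf hL) with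
  | _ e ih =>
    intro hee hmem
    obtain ⟨G, hG, hGe⟩ := hmem
    obtain ⟨F₀, hF₀, hεF₀⟩ := exists_lift ε Φ hG
    have hcomm : ∀ j, MvPowerSeries.map (ε : A →+* k) (F₀ j)
        = MvPowerSeries.C (σ := Fin n) 1 * G j := by
      intro j
      rw [hεF₀ j, map_one, one_mul]
    have oracle : ∀ f : Idx n p, idxLt L f e → (∃ F ∈ M, IsExp L F f) →
        ∃ H ∈ M, ∃ w : Idx n p, ∃ β : Fin n →₀ ℕ, f = (w.1 + β, w.2) ∧ IsExp L H w ∧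
          ε (MvPowerSeries.coeff w.1 (H w.2)) ≠ 0 := by
      intro f hfe hfN1
      obtain ⟨w, hwV, β, hfβ⟩ := mem_decomp_vertex hL
        (fun d hd γ => diagram_shift hL hd γ) f hfN1
      have hwf : ¬ idxLt L f w := by
        rw [hfβ]
        exact not_idxLt_add_self hL w β
      have hwe : idxLt L w e := by
        rcases idxLt_trichotomy L w f with h | h | h
        · exact idxLt_trans h hfe
        · exact h ▸ hfe
        · exact absurd h hwf
      have hwestar : idxLt L w estar := by
        rcases idxLt_trichotomy L estar e with h | h | h
        · exact absurd h hee
        · exact h ▸ hwe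
        · exact idxLt_trans hwe h
      have hwV2 := (hSD w hwestar).mp hwV
      obtain ⟨H, hH, hHw, hεc⟩ := ih w hwe (idxLt_asymm hwestar) hwV2.1
      exact ⟨H, hH, w, β, hfβ, hHw, hεc⟩
    apply raise hL hGe oracle ({d' : Idx n p | idxLt L d' e}.ncard) F₀ hF₀ 1 one_ne_zero hcomm
    intro d _ _
    exact Set.ncard_le_ncard (fun d' hd' => hd'.1) (finite_idxLt hL e)

end Main

end QDiv
namespace QDiv

/-- **Lemma 4.3 (semicontinuity under specialization).** For a `k`-algebra `A` with a
`k`-point `ε : A → k`, the diagram of the submodule generated by `Φ_1,…,Φ_q` over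
`A[[x]]` is less than or equal to the diagram of the submodule generated by their
specializations over `k[[x]]`, in the total order on diagrams. -/
theorem diagram_le_diagram_specialization
    {n p q : ℕ} (hn : 0 < n) (hp : 0 < p)
    {k : Type*} [Field k] {A : Type*} [CommRing A] [Algebra k A]
    (ε : A →ₐ[k] k)
    (L : Fin n → ℝ) (hL : ∀ i, 0 < L i)
    (Φ : Fin q → (Fin p → MvPowerSeries (Fin n) A)) :
    DiagLE L
      (diagram L (Submodule.span (MvPowerSeries (Fin n) A) (Set.range Φ)))
      (diagram L (Submodule.span (MvPowerSeries (Fin n) k)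
        (Set.range fun i => fun j =>
          MvPowerSeries.map (ε : A →+* k) (Φ i j)))) := by
  classical
  set N₁ := diagram L (Submodule.span (MvPowerSeries (Fin n) A) (Set.range Φ)) with hN₁
  set N₂ := diagram L (Submodule.span (MvPowerSeries (Fin n) k)
    (Set.range fun i => fun j => MvPowerSeries.map (ε : A →+* k) (Φ i j))) with hN₂
  by_cases hiff : ∀ e, IsVertex N₁ e ↔ IsVertex N₂ e
  · exact Or.inl hiff
  · right
    have hSne : {e : Idx n p | ¬ (IsVertex N₁ e ↔ IsVertex N₂ e)}.Nonempty := by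
      obtain ⟨e, he⟩ := not_forall.mp hiff
      exact ⟨e, he⟩
    obtain ⟨estar, hestar, hmin⟩ := exists_min hL hSne
    have hSD : ∀ d : Idx n p, idxLt L d estar → (IsVertex N₁ d ↔ IsVertex N₂ d) := by
      intro d hd
      by_contra hcon
      exact hmin d hcon hd
    by_cases hV1 : IsVertex N₁ estar
    · have hnV2 : ¬ IsVertex N₂ estar := fun h => hestar ⟨fun _ => h, fun _ => hV1⟩
      exact ⟨estar, hV1, hnV2, hSD⟩
    · exfalso
      have hV2 : IsVertex N₂ estar := by
        by_contra hnV2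
        exact hestar ⟨fun h => absurd h hV1, fun h => absurd h hnV2⟩
      obtain ⟨F, hF, hFe, -⟩ :=
        claim hL ε Φ estar hSD estar (idxLt_irrefl L estar) hV2.1
      have hmemN1 : estar ∈ N₁ := ⟨F, hF, hFe⟩
      obtain ⟨w, hwV, β, hwβ⟩ := mem_decomp_vertex hL
        (fun d hd γ => diagram_shift hL hd γ) estar hmemN1
      have hwne : w ≠ estar := by
        rintro rfl
        exact hV1 hwV
      have hwlt : idxLt L w estar := by
        have h1 : ¬ idxLt L estar w := by
          rw [hwβ]
          exact not_idxLt_add_self hL w β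
        rcases idxLt_trichotomy L w estar with h | h | h
        · exact h
        · exact absurd h hwne
        · exact absurd h h1
      have hwV2 : IsVertex N₂ w := (hSD w hwlt).mp hwV
      exact not_isVertex_of_decomp
        (fun d hd γ => diagram_shift hL hd γ) hwV2.1 hwne hwβ hV2

end QDiv
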